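/- Let Φ(x) := (2π)^{−1/2} ∫_{−∞}^{x} e^{−v²/2} dv denote the standard normal cumulative distribution function. Let Y ∈ (1, 2), A > 0, t₀ > 0, and let c, σ̂ : (0, t₀) → (0, ∞) be such that c(t) = Φ(σ̂(t)√t / 2) − Φ(−σ̂(t)√t / 2) for all t ∈ (0, t₀) (i.e. c(t) is the normalized at-the-money Black–Scholes call price with volatility σ̂(t)), and c(t)/t^{1/Y} → A as t → 0+. Then lim_{t → 0+} σ̂(t) · t^{1/2 − 1/Y} = √(2π) · A. (The at-the-money implied volatility asymptotics of Proposition 4.4: if the at-the-money call price is asymptotic to A t^{1/Y}, then σ̂_t(0) ~ √(2π) A t^{1/Y − 1/2}.) -/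

import Mathlib

/-!
Write `F x = Φ(x) − Φ(−x)` (`atmCallPrice`), so that `c(t) = F(x(t))` with
`x(t) = σ̂(t)√t/2`. `F` is strictly increasing with `F 0 = 0` and `F'(0) = 2/√(2π)`.
Since `c(t) → 0`, monotonicity forces `x(t) → 0+`, hence `x(t)/c(t) → √(2π)/2`, and
`σ̂(t) t^{1/2 − 1/Y} = 2 · x(t)/c(t) · c(t)/t^{1/Y} → √(2π) A`.
-/

open Filter Topology MeasureTheory

/-- The standard normal cumulative distribution function
`Φ(x) = (2π)^{−1/2} ∫_{−∞}^{x} e^{−v²/2} dv`. -/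
noncomputable def stdNormalCdf (x : ℝ) : ℝ :=
  (2 * Real.pi) ^ (-(1 : ℝ) / 2) * ∫ v in Set.Iic x, Real.exp (-v ^ 2 / 2)

theorem hasDerivAt_integral_neg_self {E : Type*} [NormedAddCommGroup E] [NormedSpace ℝ E]
    [CompleteSpace E] {f : ℝ → E} (hf : Continuous f) (x : ℝ) :
    HasDerivAt (fun u => ∫ v in (-u)..u, f v) (f x + f (-x)) x := by
  have hright := (hf.integral_hasStrictDerivAt 0 x).hasDerivAt
  have hleft := ((hf.integral_hasStrictDerivAt 0 (-x)).hasDerivAt.scomp x (hasDerivAt_neg x))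
  convert hright.sub hleft using 1
  · ext u
    simp only [Function.comp_def, Pi.sub_apply]
    rw [intervalIntegral.integral_symm (-u) 0, sub_neg_eq_add, add_comm,
      intervalIntegral.integral_add_adjacent_intervals (hf.intervalIntegrable _ _)
        (hf.intervalIntegrable _ _)]
  · simp

theorem tendsto_of_strictMono_comp {ι α β : Type*} [LinearOrder α] [TopologicalSpace α]
    [OrderTopology α] [Preorder β] [TopologicalSpace β] [OrderTopology β]
    {g : α → β} (hg : StrictMono g) {l : Filter ι} {x : ι → α} {a : α}
    (hxa : ∀ᶠ i in l, a ≤ x i) (hgx : Tendsto (g ∘ x) l (𝓝 (g a))) :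
    Tendsto x l (𝓝 a) := by
  rw [tendsto_order] at hgx ⊢
  refine ⟨fun b hb => hxa.mono fun i hi => hb.trans_le hi, fun b hb => ?_⟩
  filter_upwards [hgx.2 (g b) (hg hb)] with i hi
  exact hg.lt_iff_lt.mp hi

theorem tendsto_zero_of_tendsto_div_rpow {p A : ℝ} (hp : 0 < p) {f : ℝ → ℝ}
    (hf : Tendsto (fun t => f t / t ^ p) (𝓝[>] 0) (𝓝 A)) : Tendsto f (𝓝[>] 0) (𝓝 0) := by
  have hpow : Tendsto (fun t : ℝ => t ^ p) (𝓝[>] 0) (𝓝 0) := by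
    have h := (Real.continuousAt_rpow_const 0 p (Or.inr hp.le)).tendsto.mono_left
      (nhdsWithin_le_nhds (s := Set.Ioi 0))
    rwa [Real.zero_rpow hp.ne'] at h
  have h := hf.mul hpow
  rw [mul_zero] at h
  refine h.congr' ?_
  filter_upwards [self_mem_nhdsWithin] with t ht
  exact div_mul_cancel₀ _ (Real.rpow_pos_of_pos ht _).ne'

lemma integrable_exp_neg_sq_div_two : Integrable fun v : ℝ => Real.exp (-v ^ 2 / 2) := by
  simpa [neg_div, div_eq_inv_mul] using integrable_exp_neg_mul_sq (b := 1/2) (by norm_num)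

noncomputable def atmCallPrice (x : ℝ) : ℝ := stdNormalCdf x - stdNormalCdf (-x)

lemma atmCallPrice_eq_integral (x : ℝ) :
    atmCallPrice x = (Real.sqrt (2 * Real.pi))⁻¹ * ∫ v in (-x)..x, Real.exp (-v ^ 2 / 2) := by
  rw [atmCallPrice, stdNormalCdf, stdNormalCdf, ← mul_sub,
    intervalIntegral.integral_Iic_sub_Iic integrable_exp_neg_sq_div_two.integrableOn
      integrable_exp_neg_sq_div_two.integrableOn, Real.sqrt_eq_rpow,
    ← Real.rpow_neg (by positivity)]
  norm_num

lemma hasDerivAt_atmCallPrice (x : ℝ) :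
    HasDerivAt atmCallPrice (2 / Real.sqrt (2 * Real.pi) * Real.exp (-x ^ 2 / 2)) x := by
  have h := (hasDerivAt_integral_neg_self (f := fun v : ℝ => Real.exp (-v ^ 2 / 2))
    (by fun_prop) x).const_mul (Real.sqrt (2 * Real.pi))⁻¹
  rw [funext atmCallPrice_eq_integral]
  refine h.congr_deriv ?_
  rw [neg_sq]
  ring

lemma strictMono_atmCallPrice : StrictMono atmCallPrice :=
  strictMono_of_hasDerivAt_pos hasDerivAt_atmCallPrice fun x => by positivity

lemma atmCallPrice_zero : atmCallPrice 0 = 0 := by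
  simp [atmCallPrice]

lemma tendsto_self_div_atmCallPrice :
    Tendsto (fun x => x / atmCallPrice x) (𝓝[≠] 0) (𝓝 (Real.sqrt (2 * Real.pi) / 2)) := by
  have h := (hasDerivAt_iff_tendsto_slope.mp (hasDerivAt_atmCallPrice 0)).inv₀ (by positivity)
  convert h using 2 with x
  · simp [slope_def_field, atmCallPrice_zero]
  · simp

theorem atm_implied_volatility_asymptotics_general
    (Y A t₀ : ℝ) (hY : Y ∈ Set.Ioo (1 : ℝ) 2) (ht₀ : 0 < t₀)
    (c σhat : ℝ → ℝ)
    (hpos : ∀ t, 0 < t → t < t₀ → 0 < c t ∧ 0 < σhat t)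
    (hc : ∀ t, 0 < t → t < t₀ →
      c t = stdNormalCdf (σhat t * Real.sqrt t / 2)
        - stdNormalCdf (-(σhat t * Real.sqrt t / 2)))
    (hlim : Tendsto (fun t => c t / t ^ (1 / Y)) (𝓝[>] (0 : ℝ)) (𝓝 A)) :
    Tendsto (fun t => σhat t * t ^ (1 / 2 - 1 / Y)) (𝓝[>] (0 : ℝ))
      (𝓝 (Real.sqrt (2 * Real.pi) * A)) := by
  set x : ℝ → ℝ := fun t => σhat t * Real.sqrt t / 2 with hx_def
  have hnear : ∀ᶠ t in 𝓝[>] (0 : ℝ), t ∈ Set.Ioo 0 t₀ := Ioo_mem_nhdsGT ht₀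
  have hcx : ∀ᶠ t in 𝓝[>] (0 : ℝ), atmCallPrice (x t) = c t := by
    filter_upwards [hnear] with t ht using (hc t ht.1 ht.2).symm
  have hxpos : ∀ᶠ t in 𝓝[>] (0 : ℝ), 0 < x t := by
    filter_upwards [hnear] with t ht
    have := (hpos t ht.1 ht.2).2
    have := Real.sqrt_pos.mpr ht.1
    positivity
  have hc0 : Tendsto c (𝓝[>] 0) (𝓝 0) :=
    tendsto_zero_of_tendsto_div_rpow (one_div_pos.mpr (by linarith [hY.1])) hlim
  have hx : Tendsto x (𝓝[>] 0) (𝓝[>] 0) := by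
    refine tendsto_nhdsWithin_iff.mpr ⟨tendsto_of_strictMono_comp strictMono_atmCallPrice
      (hxpos.mono fun _ => le_of_lt) ?_, hxpos⟩
    rw [atmCallPrice_zero]
    exact hc0.congr' (hcx.mono fun _ h => h.symm)
  have hratio := tendsto_self_div_atmCallPrice.comp
    (hx.mono_right (nhdsWithin_mono _ fun _ h => ne_of_gt h))
  rw [show Real.sqrt (2 * Real.pi) * A = 2 * (Real.sqrt (2 * Real.pi) / 2) * A by ring]
  refine ((hratio.const_mul 2).mul hlim).congr' ?_
  filter_upwards [hnear, hcx] with t ht hct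
  have hct_pos : 0 < c t := (hpos t ht.1 ht.2).1
  rw [Function.comp_apply, hct, Real.rpow_sub ht.1, ← Real.sqrt_eq_rpow, hx_def]
  field_simp

/-- At-the-money implied volatility asymptotics (Proposition 4.4): if the normalized
at-the-money Black–Scholes call price `c(t) = Φ(σ̂(t)√t/2) − Φ(−σ̂(t)√t/2)` satisfies
`c(t)/t^{1/Y} → A` as `t → 0+` (with `Y ∈ (1,2)`, `A > 0`), then
`σ̂(t) t^{1/2 − 1/Y} → √(2π) A`. -/
theorem atm_implied_volatility_asymptotics
    (Y A t₀ : ℝ) (hY : Y ∈ Set.Ioo (1 : ℝ) 2) (hA : 0 < A) (ht₀ : 0 < t₀)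
    (c σhat : ℝ → ℝ)
    (hpos : ∀ t, 0 < t → t < t₀ → 0 < c t ∧ 0 < σhat t)
    (hc : ∀ t, 0 < t → t < t₀ →
      c t = stdNormalCdf (σhat t * Real.sqrt t / 2)
        - stdNormalCdf (-(σhat t * Real.sqrt t / 2)))
    (hlim : Tendsto (fun t => c t / t ^ (1 / Y)) (𝓝[>] (0 : ℝ)) (𝓝 A)) :
    Tendsto (fun t => σhat t * t ^ (1 / 2 - 1 / Y)) (𝓝[>] (0 : ℝ))
      (𝓝 (Real.sqrt (2 * Real.pi) * A)) :=
  atm_implied_volatility_asymptotics_general Y A t₀ hY ht₀ c σhat hpos hc hlim
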